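/- For every integer n ≥ 2 and every real x with 0 < x < 1, one has δ_n² − k_n(x)·k_n(1/x) > 0. (Consequently a relative equilibrium of a central mass surrounded by two homothetic regular n-gons is never really perverse: the associated 2×2 mass matrix with rows (δ_n, k_n(1/x)) and (k_n(x), δ_n) is invertible.) -/

import Mathlib

/-!
Write `θ_l = 2πl/n`, `ζ = e^{2πi/n}`, `D_l = 1 + x² - 2x cos θ_l = |1 - x ζ^l|²` and
`A_l = 1 - x cos θ_l`, so that `A_l / D_l = Re (1 - x ζ^l)⁻¹`. Expanding `(1 - x ζ^l)⁻¹` as a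
geometric series and using orthogonality of the `n`-th roots of unity gives
`∑ A_l / D_l = n / (1 - xⁿ) > n`.

Since `A_l² ≤ D_l`, we get `A_l / D_l^{3/2} ≥ (A_l / D_l)² ≥ 2 A_l / D_l - 1`, hence `h_n(x) > 1`.
For `1/x`, `h_n(1/x) = (x² / n) ∑ (x - cos θ_l) / D_l^{3/2}`; replacing `√D_l` by `√(1 - x²)`
only increases each term, and `∑ x (x - cos θ_l) / D_l = ∑ (1 - A_l / D_l) = n - n / (1 - xⁿ)`,
which is negative. So `k_n(x) > 0 > k_n(1/x)` and `δ_n² - k_n(x) k_n(1/x) > δ_n² ≥ 0`.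
-/

/-- `δ_n = (1/(4n))·∑_{l=1}^{n−1} 1/sin(πl/n) − 1`. -/
noncomputable def deltaN (n : ℕ) : ℝ :=
  (1 / (4 * (n : ℝ))) * ∑ l ∈ Finset.Icc 1 (n - 1), 1 / Real.sin (Real.pi * l / n) - 1

/-- `h_n(x,θ) = (1/n)·∑_{l=1}^{n} (1 − x·cos(2πl/n + θ))/(1 + x² − 2x·cos(2πl/n + θ))^{3/2}`. -/
noncomputable def hN (n : ℕ) (x θ : ℝ) : ℝ :=
  (1 / (n : ℝ)) * ∑ l ∈ Finset.Icc 1 n,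
    (1 - x * Real.cos (2 * Real.pi * l / n + θ)) /
      (1 + x ^ 2 - 2 * x * Real.cos (2 * Real.pi * l / n + θ)) ^ ((3 : ℝ) / 2)

/-- `k_n(x,θ) = h_n(x,θ) − 1`. -/
noncomputable def kN (n : ℕ) (x θ : ℝ) : ℝ := hN n x θ - 1

open Finset Real

theorem Finset.sum_Icc_one_eq_sum_range {M : Type*} [AddCommMonoid M] {f : ℕ → M} {n : ℕ}
    (hf : f n = f 0) : ∑ l ∈ Icc 1 n, f l = ∑ l ∈ range n, f l := by
  cases n with
  | zero => rfl
  | succ k =>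
    rw [← Ico_add_one_right_eq_Icc, sum_Ico_eq_sum_range, sum_range_succ', Nat.add_sub_cancel,
      sum_range_succ]
    simp only [add_comm 1, hf]

theorem IsPrimitiveRoot.sum_inv_one_sub_mul_pow {K : Type*} [Field K] {ζ : K} {n : ℕ}
    (hζ : IsPrimitiveRoot ζ n) {z : K} (hz : z ^ n ≠ 1) :
    ∑ l ∈ range n, (1 - z * ζ ^ l)⁻¹ = n / (1 - z ^ n) := by
  have hz' : 1 - z ^ n ≠ 0 := sub_ne_zero.mpr hz.symm
  have hexpand (l : ℕ) :
      (1 - z * ζ ^ l)⁻¹ = (∑ m ∈ range n, z ^ m * (ζ ^ m) ^ l) / (1 - z ^ n) := by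
    have hgeom : (1 - z * ζ ^ l) * ∑ m ∈ range n, (z * ζ ^ l) ^ m = 1 - z ^ n := by
      rw [mul_neg_geom_sum, mul_pow, ← pow_mul, mul_comm l, pow_mul, hζ.pow_eq_one, one_pow,
        mul_one]
    have hne : 1 - z * ζ ^ l ≠ 0 := left_ne_zero_of_mul (hgeom ▸ hz')
    rw [eq_div_iff hz', ← hgeom, inv_mul_cancel_left₀ hne]
    exact sum_congr rfl fun m _ => by ring
  have horth : ∀ m ∈ range n,
      z ^ m * ∑ l ∈ range n, (ζ ^ m) ^ l = if m = 0 then (n : K) else 0 := by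
    intro m hm
    split_ifs with h0
    · simp [h0]
    have hne : ζ ^ m - 1 ≠ 0 := sub_ne_zero.mpr (hζ.pow_ne_one_of_pos_of_lt h0 (mem_range.mp hm))
    have hgeom := geom_sum_mul (ζ ^ m) n
    rw [← pow_mul, mul_comm m, pow_mul, hζ.pow_eq_one, one_pow, sub_self] at hgeom
    rw [(mul_eq_zero.mp hgeom).resolve_right hne, mul_zero]
  have hn : 0 < n := Nat.pos_of_ne_zero (by rintro rfl; exact hz (pow_zero z))
  rw [sum_congr rfl fun l _ => hexpand l, ← sum_div, sum_comm]
  simp_rw [← mul_sum]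
  rw [sum_congr rfl horth, sum_ite_eq' _ _ _, if_pos (mem_range.mpr hn)]

theorem Complex.re_inv_one_sub_mul_exp (x θ : ℝ) :
    (1 - x * exp (θ * I))⁻¹.re = (1 - x * Real.cos θ) / (1 + x ^ 2 - 2 * x * Real.cos θ) := by
  rw [Complex.inv_re, Complex.normSq_apply]
  simp only [Complex.sub_re, Complex.sub_im, Complex.mul_re, Complex.mul_im, Complex.one_re,
    Complex.one_im, Complex.ofReal_re, Complex.ofReal_im, Complex.exp_ofReal_mul_I_re,
    Complex.exp_ofReal_mul_I_im, zero_mul, sub_zero, add_zero, zero_sub, neg_mul_neg]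
  congr 1
  linear_combination x ^ 2 * Real.sin_sq_add_cos_sq θ

theorem sum_div_one_add_sq_sub_two_mul_cos {n : ℕ} {x : ℝ} (hx : x ^ n ≠ 1) :
    ∑ l ∈ Icc 1 n, (1 - x * cos (2 * π * l / n)) / (1 + x ^ 2 - 2 * x * cos (2 * π * l / n)) =
      n / (1 - x ^ n) := by
  have hn : n ≠ 0 := by rintro rfl; exact hx (pow_zero x)
  have hζ := Complex.isPrimitiveRoot_exp n hn
  have hroots := congrArg Complex.re (hζ.sum_inv_one_sub_mul_pow (z := x) (by exact_mod_cast hx))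
  have hpow (l : ℕ) :
      Complex.exp (2 * π * Complex.I / n) ^ l = Complex.exp ((2 * π * l / n : ℝ) * Complex.I) := by
    rw [← Complex.exp_nat_mul]; push_cast; ring_nf
  simp only [Complex.re_sum, hpow, Complex.re_inv_one_sub_mul_exp] at hroots
  rw [sum_Icc_one_eq_sum_range (by simp [hn]), hroots]
  exact_mod_cast Complex.ofReal_re _

theorem sq_one_sub_mul_cos_le (x θ : ℝ) :
    (1 - x * cos θ) ^ 2 ≤ 1 + x ^ 2 - 2 * x * cos θ := by
  nlinarith [sin_sq_add_cos_sq θ, sq_nonneg (x * sin θ)]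

theorem one_sub_mul_cos_nonneg {x : ℝ} (hx : |x| ≤ 1) (θ : ℝ) : 0 ≤ 1 - x * cos θ := by
  have : |x * cos θ| ≤ 1 := by
    rw [abs_mul]; exact mul_le_one₀ hx (abs_nonneg _) (abs_cos_le_one θ)
  linarith [le_abs_self (x * cos θ)]

theorem one_add_sq_sub_two_mul_cos_pos {x : ℝ} (hx : |x| < 1) (θ : ℝ) :
    0 < 1 + x ^ 2 - 2 * x * cos θ := by
  have : x * cos θ ≤ |x| := by
    calc x * cos θ ≤ |x * cos θ| := le_abs_self _
      _ ≤ |x| := by rw [abs_mul]; exact mul_le_of_le_one_right (abs_nonneg x) (abs_cos_le_one θ)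
  nlinarith [sq_abs x, abs_nonneg x]

theorem rpow_three_div_two_eq_mul_sqrt {d : ℝ} (hd : 0 ≤ d) : d ^ ((3 : ℝ) / 2) = d * √d := by
  rw [show (3 : ℝ) / 2 = 1 + 1 / 2 by norm_num, rpow_add' hd (by norm_num), rpow_one,
    ← sqrt_eq_rpow]

theorem two_mul_div_sub_one_le_div_rpow {a d : ℝ} (ha : 0 ≤ a) (had : a ^ 2 ≤ d) (hd : 0 < d) :
    2 * (a / d) - 1 ≤ a / d ^ ((3 : ℝ) / 2) := by
  have ha_le : a ≤ √d := le_sqrt_of_sq_le had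
  calc 2 * (a / d) - 1 ≤ (a / d) ^ 2 := by nlinarith [sq_nonneg (a / d - 1)]
    _ = a * a / (d * d) := by ring
    _ ≤ a * √d / (d * d) := by gcongr
    _ = a / d ^ ((3 : ℝ) / 2) := by
      rw [rpow_three_div_two_eq_mul_sqrt hd.le]
      field_simp
      rw [sq_sqrt hd.le]

theorem div_rpow_le_div_mul_sqrt {a d k : ℝ} (hd : 0 < d) (hk : 0 < k) (h : 0 ≤ a * (d - k)) :
    a / d ^ ((3 : ℝ) / 2) ≤ a / (d * √k) := by
  have hsd := sqrt_pos.mpr hd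
  have hsk := sqrt_pos.mpr hk
  have hsign : 0 ≤ a * (√d - √k) := by
    refine nonneg_of_mul_nonneg_left ?_ (add_pos hsd hsk)
    calc 0 ≤ a * (d - k) := h
      _ = a * (√d - √k) * (√d + √k) := by
        linear_combination a * sq_sqrt hk.le - a * sq_sqrt hd.le
  rw [rpow_three_div_two_eq_mul_sqrt hd.le, div_le_div_iff₀ (by positivity) (by positivity)]
  nlinarith [mul_nonneg hsign hd.le]

theorem one_sub_inv_mul_cos_div_rpow_eq {x : ℝ} (hx : 0 < x) (θ : ℝ) :
    (1 - x⁻¹ * cos θ) / (1 + x⁻¹ ^ 2 - 2 * x⁻¹ * cos θ) ^ ((3 : ℝ) / 2) =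
      x ^ 2 * (x - cos θ) / (1 + x ^ 2 - 2 * x * cos θ) ^ ((3 : ℝ) / 2) := by
  have hD : 0 ≤ 1 + x ^ 2 - 2 * x * cos θ := by
    nlinarith [sq_nonneg (1 - x), mul_nonneg hx.le (sub_nonneg.mpr (cos_le_one θ))]
  have hbase : 1 + x⁻¹ ^ 2 - 2 * x⁻¹ * cos θ = (1 + x ^ 2 - 2 * x * cos θ) / x ^ 2 := by
    field_simp; ring
  have hx3 : (x ^ 2) ^ ((3 : ℝ) / 2) = x ^ 3 := by
    rw [rpow_three_div_two_eq_mul_sqrt (by positivity), sqrt_sq hx.le]; ring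
  rw [hbase, div_rpow hD (by positivity), hx3]
  field_simp

theorem one_lt_hN {n : ℕ} (hn : n ≠ 0) {x : ℝ} (hx0 : 0 < x) (hx1 : x < 1) : 1 < hN n x 0 := by
  have hxn : 0 < x ^ n := pow_pos hx0 n
  have hxn1 : x ^ n < 1 := pow_lt_one₀ hx0.le hx1 hn
  have hx : |x| < 1 := by rwa [abs_of_pos hx0]
  unfold hN
  simp only [add_zero]
  calc 1 < 2 / (1 - x ^ n) - 1 := by
        rw [lt_sub_iff_add_lt, one_add_one_eq_two, lt_div_iff₀ (by linarith)]; linarith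
    _ = 1 / n * ∑ l ∈ Icc 1 n, (2 * ((1 - x * cos (2 * π * l / n)) /
          (1 + x ^ 2 - 2 * x * cos (2 * π * l / n))) - 1) := by
        rw [sum_sub_distrib, ← mul_sum, sum_div_one_add_sq_sub_two_mul_cos hxn1.ne, sum_const,
          Nat.card_Icc, Nat.add_sub_cancel, nsmul_one]
        field_simp
    _ ≤ 1 / n * ∑ l ∈ Icc 1 n, (1 - x * cos (2 * π * l / n)) /
          (1 + x ^ 2 - 2 * x * cos (2 * π * l / n)) ^ ((3 : ℝ) / 2) := by
        gcongr with l
        exact two_mul_div_sub_one_le_div_rpow (one_sub_mul_cos_nonneg hx.le _)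
          (sq_one_sub_mul_cos_le _ _) (one_add_sq_sub_two_mul_cos_pos hx _)

theorem hN_inv_nonpos {n : ℕ} (hn : n ≠ 0) {x : ℝ} (hx0 : 0 < x) (hx1 : x < 1) :
    hN n x⁻¹ 0 ≤ 0 := by
  have hxn1 : x ^ n < 1 := pow_lt_one₀ hx0.le hx1 hn
  have hx : |x| < 1 := by rwa [abs_of_pos hx0]
  have hk : 0 < 1 - x ^ 2 := by nlinarith
  have hD := one_add_sq_sub_two_mul_cos_pos hx
  unfold hN
  simp only [add_zero, one_sub_inv_mul_cos_div_rpow_eq hx0]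
  calc 1 / (n : ℝ) * ∑ l ∈ Icc 1 n, x ^ 2 * (x - cos (2 * π * l / n)) /
          (1 + x ^ 2 - 2 * x * cos (2 * π * l / n)) ^ ((3 : ℝ) / 2)
      ≤ 1 / n * ∑ l ∈ Icc 1 n, x ^ 2 * (x - cos (2 * π * l / n)) /
          ((1 + x ^ 2 - 2 * x * cos (2 * π * l / n)) * √(1 - x ^ 2)) := by
        refine mul_le_mul_of_nonneg_left (sum_le_sum fun l _ => ?_) (by positivity)
        refine div_rpow_le_div_mul_sqrt (hD _) hk ?_
        -- `x - cos θ_l` has the sign of `D_l - (1 - x²) = 2x (x - cos θ_l)`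
        nlinarith [sq_nonneg (x - cos (2 * π * l / n)), mul_pos (pow_pos hx0 2) hx0]
    _ = x / (n * √(1 - x ^ 2)) * ∑ l ∈ Icc 1 n, (1 - (1 - x * cos (2 * π * l / n)) /
          (1 + x ^ 2 - 2 * x * cos (2 * π * l / n))) := by
        rw [mul_sum, mul_sum]
        refine sum_congr rfl fun l _ => ?_
        have hDl := (hD (2 * π * l / n)).ne'
        generalize cos (2 * π * l / n) = c at hDl ⊢
        rw [one_sub_div hDl]
        field_simp
        ring
    _ = x / (n * √(1 - x ^ 2)) * (n - n / (1 - x ^ n)) := by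
        rw [sum_sub_distrib, sum_div_one_add_sq_sub_two_mul_cos hxn1.ne, sum_const, Nat.card_Icc,
          Nat.add_sub_cancel, nsmul_one]
    _ ≤ 0 := by
        refine mul_nonpos_of_nonneg_of_nonpos (by positivity) (sub_nonpos.mpr ?_)
        rw [le_div_iff₀ (by linarith)]
        nlinarith [pow_pos hx0 n]

/-- `δ_n² − k_n(x)·k_n(1/x) > 0` for `0 < x < 1`: two homothetic regular `n`-gons around a
central mass never give a really perverse relative equilibrium (the mass matrix is invertible). -/
theorem twoHomothetic_not_reallyPerverse (n : ℕ) (hn : 2 ≤ n) (x : ℝ)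
    (hx0 : 0 < x) (hx1 : x < 1) :
    0 < deltaN n ^ 2 - kN n x 0 * kN n x⁻¹ 0 ∧
    (!![deltaN n, kN n x⁻¹ 0; kN n x 0, deltaN n] : Matrix (Fin 2) (Fin 2) ℝ).det ≠ 0 := by
  have hn0 : n ≠ 0 := by omega
  have hk : 0 < kN n x 0 := sub_pos.mpr (one_lt_hN hn0 hx0 hx1)
  have hk_inv : kN n x⁻¹ 0 < 0 := sub_neg.mpr ((hN_inv_nonpos hn0 hx0 hx1).trans_lt one_pos)
  have hpos : 0 < deltaN n ^ 2 - kN n x 0 * kN n x⁻¹ 0 :=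
    sub_pos.mpr ((mul_neg_of_pos_of_neg hk hk_inv).trans_le (sq_nonneg _))
  refine ⟨hpos, ?_⟩
  rw [Matrix.det_fin_two_of]
  linarith
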